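/- arXiv:1205.5537 — 2 statements merged into one kernel-verified Lean document; each statement's English description precedes it below -/
import Mathlib

section
/- Let m, n ≥ 2 with m ≡ 2 (mod 3), k_1 = ⌊m/3⌋, n = 3k_2 + 1, and 2k_2 ≥ k_1. Then γ(C_m □ C_n) = n(k_1 + 1). -/
/-- Arc relation of the directed cycle on `ZMod m`: an arc from `x` to `x+1`. -/
def cycArc (m : ℕ) : ZMod m → ZMod m → Prop := fun x y => y = x + 1

/-- Arc relation of the Cartesian product of two digraphs given by arc relations. -/
def prodArc {α β : Type*} (A : α → α → Prop) (B : β → β → Prop) :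
    α × β → α × β → Prop :=
  fun u v => (A u.1 v.1 ∧ u.2 = v.2) ∨ (B u.2 v.2 ∧ u.1 = v.1)

/-- `W` is a dominating set: every vertex equals or is an out-neighbor of some vertex of `W`. -/
def IsDomSet {α : Type*} (A : α → α → Prop) (W : Set α) : Prop :=
  ∀ v, ∃ u ∈ W, u = v ∨ A u v

/-- The domination number of a digraph with arc relation `A`. -/
noncomputable def domNum (α : Type*) (A : α → α → Prop) : ℕ :=
  sInf {k | ∃ W : Set α, IsDomSet A W ∧ W.ncard = k}


/-!
Write `m = 3k₁ + 2`. Column `j` of `C_m □ C_n` is a copy of `C_m`; a vertex of it is dominated only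
from its own column (by itself or its predecessor) or horizontally from column `j - 1`, so the
numbers `d j` of dominators per column satisfy `3k₁ + 2 ≤ 2 d j + d (j - 1)`. A column with
`d j ≤ k₁` therefore forces `d (j - 1) > k₁` and `d j + d (j - 1) ≥ 2(k₁ + 1)`, and pairing these
columns with their predecessors gives `∑ d ≥ n (k₁ + 1)`.

Conversely, put the `k₁ + 1` dominators `a, a + 3, …, a + 3k₁` in a column. They miss exactly
`a + 2, a + 5, …, a + 3k₁ - 1`, which the previous column covers if it starts at `a + 2` or `a - 1`.
Moving the start by `+1` for `t = 2k₂ - k₁` columns and by `-2` for the other `n - t` closes up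
around `C_n`, because `3t - 2n = -(3k₁ + 2)`.
-/

open Finset

lemma card_eq_sum_card_section {α β : Type*} [Fintype α] [Fintype β] [DecidableEq α]
    [DecidableEq β] (W : Finset (α × β)) : #W = ∑ b, #{a | (a, b) ∈ W} := by
  calc #W = ∑ v : α × β, if v ∈ W then 1 else 0 := by rw [← card_filter, filter_univ_mem]
    _ = _ := by simp only [Fintype.sum_prod_type_right, card_filter]

lemma sum_nonneg_of_two_mul_add_perm {α : Type*} [Fintype α] (σ : Equiv.Perm α)
    (g : α → ℤ) (h : ∀ a, -1 ≤ 2 * g a + g (σ a)) : 0 ≤ ∑ a, g a := by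
  set P : Finset α := {a | g a < 0}
  have hP : ∀ {a}, a ∈ P ↔ g a < 0 := by simp [P]
  -- If `g a < 0` then `g (σ a) ≥ -g a > 0`: `P` and `σ P` are disjoint, and `g a + g (σ a) ≥ 0`.
  have hdisj : Disjoint P (P.map σ.toEmbedding) := by
    refine disjoint_right.2 fun b hb hbP => ?_
    obtain ⟨a, haP, rfl⟩ := mem_map.1 hb
    have := h a
    rw [hP] at haP hbP
    simp only [Equiv.toEmbedding_apply] at hbP
    omega
  calc 0 ≤ ∑ a ∈ P, (g a + g (σ a)) := sum_nonneg fun a ha => by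
          have := h a
          rw [hP] at ha
          omega
    _ = ∑ a ∈ P.disjUnion (P.map σ.toEmbedding) hdisj, g a := by
          rw [sum_disjUnion, sum_map, sum_add_distrib]; rfl
    _ ≤ ∑ a, g a := sum_le_sum_of_subset_of_nonneg (subset_univ _) fun a _ ha => by
          by_contra hneg
          exact ha (mem_disjUnion.2 (Or.inl (hP.2 (not_le.1 hneg))))

section ProductOfCycles

variable {m n : ℕ}

lemma prodArc_cycArc_iff {u v : ZMod m × ZMod n} :
    prodArc (cycArc m) (cycArc n) u v ↔ u = (v.1 - 1, v.2) ∨ u = (v.1, v.2 - 1) := by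
  obtain ⟨a, b⟩ := u
  obtain ⟨x, j⟩ := v
  simp only [prodArc, cycArc, Prod.mk.injEq, eq_sub_iff_add_eq]
  tauto

lemma isDomSet_prodArc_cycArc_iff {W : Set (ZMod m × ZMod n)} :
    IsDomSet (prodArc (cycArc m) (cycArc n)) W ↔
      ∀ x j, (x, j) ∈ W ∨ (x - 1, j) ∈ W ∨ (x, j - 1) ∈ W := by
  simp only [IsDomSet, prodArc_cycArc_iff, Prod.forall]
  refine forall₂_congr fun x j => ⟨?_, ?_⟩
  · rintro ⟨u, hu, rfl | rfl | rfl⟩ <;> simp_all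
  · rintro (h | h | h) <;> exact ⟨_, h, by simp⟩

lemma le_two_mul_card_add_card_of_isDomSet [NeZero m] {W : Finset (ZMod m × ZMod n)}
    (hW : IsDomSet (prodArc (cycArc m) (cycArc n)) W) (j : ZMod n) :
    m ≤ 2 * #{x | (x, j) ∈ W} + #{x | (x, j - 1) ∈ W} := by
  set S : ZMod n → Finset (ZMod m) := fun j => {x | (x, j) ∈ W}
  have hcover : univ ⊆ S j ∪ (S j).image (· + 1) ∪ S (j - 1) := fun x _ => by
    rcases isDomSet_prodArc_cycArc_iff.1 hW x j with h | h | h <;> rw [mem_coe] at h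
    · simp [S, h]
    · exact mem_union_left _ (mem_union_right _ (mem_image.2 ⟨x - 1, by simp [S, h], by simp⟩))
    · simp [S, h]
  calc m = #(univ : Finset (ZMod m)) := by simp
    _ ≤ #(S j) + #((S j).image (· + 1)) + #(S (j - 1)) :=
        (card_le_card hcover).trans <| (card_union_le _ _).trans <|
          Nat.add_le_add_right (card_union_le _ _) _
    _ ≤ 2 * #(S j) + #(S (j - 1)) := by have := card_image_le (s := S j) (f := (· + 1)); omega

lemma mul_succ_le_ncard_of_isDomSet [NeZero n] (k : ℕ) {W : Set (ZMod (3 * k + 2) × ZMod n)}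
    (hW : IsDomSet (prodArc (cycArc (3 * k + 2)) (cycArc n)) W) : n * (k + 1) ≤ W.ncard := by
  classical
  set F := W.toFinite.toFinset
  have hF : IsDomSet (prodArc (cycArc (3 * k + 2)) (cycArc n)) (F : Set _) := by simpa [F] using hW
  set d : ZMod n → ℤ := fun j => #{x | (x, j) ∈ F}
  have hd : 0 ≤ ∑ j, (d j - (k + 1)) :=
    sum_nonneg_of_two_mul_add_perm (Equiv.subRight 1) _ fun j => by
      have := le_two_mul_card_add_card_of_isDomSet hF j
      simp only [Equiv.subRight_apply, d]
      omega
  have hsum : (W.ncard : ℤ) = ∑ j, d j := by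
    rw [Set.ncard_eq_toFinset_card W, card_eq_sum_card_section]; push_cast; rfl
  simp only [sum_sub_distrib, sum_const, card_univ, ZMod.card, nsmul_eq_mul] at hd
  zify
  linarith

lemma mul_succ_le_domNum [NeZero n] (k : ℕ) :
    n * (k + 1) ≤ domNum (ZMod (3 * k + 2) × ZMod n) (prodArc (cycArc (3 * k + 2)) (cycArc n)) :=
  le_csInf ⟨_, Set.univ, fun v => ⟨v, trivial, Or.inl rfl⟩, rfl⟩ <| by
    rintro _ ⟨W, hW, rfl⟩
    exact mul_succ_le_ncard_of_isDomSet k hW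

lemma domNum_le_sum_card [NeZero m] [NeZero n] {S : ZMod n → Finset (ZMod m)}
    (hS : ∀ x j, x ∈ S j ∨ x - 1 ∈ S j ∨ x ∈ S (j - 1)) :
    domNum (ZMod m × ZMod n) (prodArc (cycArc m) (cycArc n)) ≤ ∑ j, #(S j) := by
  classical
  set W : Finset (ZMod m × ZMod n) := {v | v.1 ∈ S v.2}
  refine Nat.sInf_le ⟨W, isDomSet_prodArc_cycArc_iff.2 fun x j => by simpa [W] using hS x j, ?_⟩
  rw [Set.ncard_coe_finset, card_eq_sum_card_section]
  simp [W]

end ProductOfCycles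

def stepThreeProgression (k : ℕ) (a : ZMod (3 * k + 2)) : Finset (ZMod (3 * k + 2)) :=
  (range (k + 1)).image fun i : ℕ => a + 3 * (i : ZMod (3 * k + 2))

section StepThreeProgression

variable {k : ℕ}

lemma card_stepThreeProgression (a : ZMod (3 * k + 2)) : #(stepThreeProgression k a) = k + 1 := by
  rw [stepThreeProgression, card_image_of_injOn, card_range]
  intro i hi i' hi' h
  simp only [coe_range, Set.mem_Iio] at hi hi'
  have : ((3 * i : ℕ) : ZMod (3 * k + 2)) = (3 * i' : ℕ) := by
    push_cast
    exact add_left_cancel h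
  rw [ZMod.natCast_eq_natCast_iff', Nat.mod_eq_of_lt, Nat.mod_eq_of_lt] at this <;> omega

lemma mem_stepThreeProgression_or {a b : ZMod (3 * k + 2)} (hb : b = a + 2 ∨ b = a - 1)
    (x : ZMod (3 * k + 2)) :
    x ∈ stepThreeProgression k a ∨ x - 1 ∈ stepThreeProgression k a ∨
      x ∈ stepThreeProgression k b := by
  obtain ⟨r, hr, rfl⟩ : ∃ r < 3 * k + 2, x = a + r := ⟨(x - a).val, ZMod.val_lt _, by simp⟩
  have hmem : ∀ {c y : ZMod (3 * k + 2)} (i : ℕ), i ≤ k → y = c + 3 * i →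
      y ∈ stepThreeProgression k c := fun i hi h =>
    mem_image.2 ⟨i, mem_range.2 (by omega), h.symm⟩
  obtain ⟨i, rfl | rfl | rfl⟩ : ∃ i, r = 3 * i ∨ r = 3 * i + 1 ∨ r = 3 * i + 2 :=
    ⟨r / 3, by omega⟩
  · exact .inl (hmem i (by omega) (by push_cast; ring))
  · exact .inr (.inl (hmem i (by omega) (by push_cast; ring)))
  · refine .inr (.inr ?_)
    rcases hb with rfl | rfl
    · exact hmem i (by omega) (by push_cast; ring)
    · exact hmem (i + 1) (by omega) (by push_cast; ring)

end StepThreeProgression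

-- `j` for `j ≤ t`, then decreasing by `2` per column.
def columnStart (m t j : ℕ) : ZMod m := 3 * (min j t : ℕ) - 2 * j

lemma columnStart_pred {m n t : ℕ} [NeZero n] (ht : t < n) (htn : (3 * t : ZMod m) = 2 * n)
    (j : ZMod n) :
    columnStart m t (j - 1).val = columnStart m t j.val + 2 ∨
      columnStart m t (j - 1).val = columnStart m t j.val - 1 := by
  obtain ⟨i, hi, rfl⟩ : ∃ i < n, j = (i : ZMod n) := ⟨j.val, j.val_lt, by simp⟩
  rcases i with _ | i
  · have hpred : ((0 : ℕ) : ZMod n) - 1 = ((n - 1 : ℕ) : ZMod n) := by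
      rw [Nat.cast_sub NeZero.one_le, ZMod.natCast_self]; simp
    rw [hpred, ZMod.val_cast_of_lt (by omega), ZMod.val_cast_of_lt hi]
    left
    simp only [columnStart, min_eq_right (by omega : t ≤ n - 1), Nat.zero_min,
      Nat.cast_sub NeZero.one_le]
    push_cast
    linear_combination htn
  · rw [show ((i + 1 : ℕ) : ZMod n) - 1 = (i : ZMod n) by push_cast; ring,
      ZMod.val_cast_of_lt (by omega), ZMod.val_cast_of_lt hi]
    by_cases hit : i + 1 ≤ t
    · right
      simp only [columnStart, min_eq_left hit, min_eq_left (by omega : i ≤ t)]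
      push_cast; ring
    · left
      simp only [columnStart, min_eq_right (by omega : t ≤ i), min_eq_right (by omega : t ≤ i + 1)]
      push_cast; ring

theorem stmt_9_general (m n k₁ k₂ : ℕ)
    (hmmod : m % 3 = 2) (hk₁ : k₁ = m / 3) (hn' : n = 3 * k₂ + 1)
    (hk : k₁ ≤ 2 * k₂) :
    domNum (ZMod m × ZMod n) (prodArc (cycArc m) (cycArc n)) = n * (k₁ + 1) := by
  obtain rfl : m = 3 * k₁ + 2 := by omega
  subst hn'
  refine le_antisymm ?_ (mul_succ_le_domNum k₁)
  set t := 2 * k₂ - k₁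
  have htn : (3 * t : ZMod (3 * k₁ + 2)) = 2 * (3 * k₂ + 1 : ℕ) := by
    have h : 3 * t + (3 * k₁ + 2) = 2 * (3 * k₂ + 1) := by omega
    simpa using congrArg (Nat.cast : ℕ → ZMod (3 * k₁ + 2)) h
  calc _ ≤ ∑ j : ZMod (3 * k₂ + 1),
        #(stepThreeProgression k₁ (columnStart (3 * k₁ + 2) t j.val)) :=
        domNum_le_sum_card fun x j =>
          mem_stepThreeProgression_or (columnStart_pred (by omega) htn j) x
    _ = (3 * k₂ + 1) * (k₁ + 1) := by simp [card_stepThreeProgression]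

theorem stmt_9 (m n k₁ k₂ : ℕ) (hm : 2 ≤ m) (hn : 2 ≤ n)
    (hmmod : m % 3 = 2) (hk₁ : k₁ = m / 3) (hn' : n = 3 * k₂ + 1)
    (hk : k₁ ≤ 2 * k₂) :
    domNum (ZMod m × ZMod n) (prodArc (cycArc m) (cycArc n)) = n * (k₁ + 1) :=
  stmt_9_general m n k₁ k₂ hmmod hk₁ hn' hk
end

section
/- Let m, n ≥ 2 with m ≡ 2 (mod 3) and n ≡ 2 (mod 3), k_1 = ⌊m/3⌋, and n ≥ m. Then γ(C_m □ C_n) = n(k_1 + 1). -/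
/-!
Write `m = 3k + 2` and let `g j` count the vertices of a dominating set in the copy
`ZMod m × {j}` of `C_m`. That copy is dominated by its own vertices, their successors and the
copy `j - 1`, so `m ≤ 2 g j + g (j - 1)`. Hence a copy with `g j ≤ k` forces
`g j + g (j - 1) ≥ 2 (k + 1)`, and letting each such copy borrow its deficit from its predecessor
gives `∑ g ≥ n (k + 1)`.

Conversely, place `k + 1` vertices three apart in each copy, starting at `c j`. If consecutive
starts differ by `1` or by `-2`, copy `j - 1` dominates the positions `c j + 2, c j + 5, …` that
copy `j` misses. Since `3` is a unit mod `m` and `m ≤ n`, there are `b ≤ n` with `3 b ≡ n (mod m)`,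
so `b` shifts by `-2` and `n - b` shifts by `1` close up around `C_n`.
-/

open Finset

theorem domNum_eq_of_isDomSet {α : Type*} {A : α → α → Prop} {N : ℕ} {W : Set α}
    (hW : IsDomSet A W) (hcard : W.ncard = N) (hmin : ∀ V, IsDomSet A V → N ≤ V.ncard) :
    domNum α A = N :=
  le_antisymm (Nat.sInf_le ⟨W, hW, hcard⟩)
    (le_csInf ⟨N, W, hW, hcard⟩ fun _ ⟨V, hV, hVcard⟩ => hVcard ▸ hmin V hV)

theorem card_mul_le_sum_of_compensating_perm {ι : Type*} [Fintype ι] (σ : Equiv.Perm ι)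
    (g : ι → ℕ) (K : ℕ) (h : ∀ i, g i < K → 2 * K ≤ g i + g (σ i)) :
    Fintype.card ι * K ≤ ∑ i, g i := by
  -- each `i` with `g i < K` borrows the deficit `K - g i` from `σ i`, which can afford it
  have hshift : ∀ i, K + (K - g (σ.symm i)) ≤ g i + (K - g i) := by
    intro i
    have := h (σ.symm i)
    rw [Equiv.apply_symm_apply] at this
    omega
  have := sum_le_sum fun i (_ : i ∈ univ) => hshift i
  rw [sum_add_distrib, sum_add_distrib, Equiv.sum_comp σ.symm (fun i => K - g i), sum_const,
    card_univ, smul_eq_mul] at this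
  omega

section Torus

variable {m n : ℕ}

def row (W : Finset (ZMod m × ZMod n)) (j : ZMod n) : Finset (ZMod m) :=
  (W.filter (·.2 = j)).image Prod.fst

@[simp]
theorem mem_row {W : Finset (ZMod m × ZMod n)} {i : ZMod m} {j : ZMod n} :
    i ∈ row W j ↔ (i, j) ∈ W := by
  simp [row]

theorem sum_card_row [NeZero n] (W : Finset (ZMod m × ZMod n)) :
    ∑ j, (row W j).card = W.card := by
  rw [card_eq_sum_card_fiberwise (f := Prod.snd) (t := univ) fun _ _ => mem_univ _]
  refine sum_congr rfl fun j _ => card_image_of_injOn ?_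
  rintro ⟨a, b⟩ hab ⟨c, d⟩ hcd (h : a = c)
  simp only [coe_filter, Set.mem_ofPred_eq] at hab hcd
  exact Prod.ext h (hab.2.trans hcd.2.symm)

theorem le_two_mul_card_row_add_card_row_sub_one [NeZero m] {W : Finset (ZMod m × ZMod n)}
    (hW : IsDomSet (prodArc (cycArc m) (cycArc n)) W) (j : ZMod n) :
    m ≤ 2 * (row W j).card + (row W (j - 1)).card := by
  have hcover : (univ : Finset (ZMod m)) ⊆ row W j ∪ (row W j).image (· + 1) ∪ row W (j - 1) := by
    intro i _
    obtain ⟨⟨i', j'⟩, hW', h⟩ := hW (i, j)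
    simp only [prodArc, cycArc, Prod.ext_iff] at h
    rcases h with ⟨rfl, rfl⟩ | ⟨rfl, rfl⟩ | ⟨rfl, rfl⟩ <;> simp_all
  calc m = (univ : Finset (ZMod m)).card := (ZMod.card m).symm
    _ ≤ _ := card_le_card hcover
    _ ≤ (row W j).card + (row W j).card + (row W (j - 1)).card := by
      grw [card_union_le, card_union_le, card_image_le]
    _ = _ := by ring

theorem mul_succ_le_card_of_isDomSet [NeZero n] {k : ℕ} (hm : m = 3 * k + 2)
    {W : Finset (ZMod m × ZMod n)} (hW : IsDomSet (prodArc (cycArc m) (cycArc n)) W) :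
    n * (k + 1) ≤ W.card := by
  have : NeZero m := ⟨by omega⟩
  calc n * (k + 1) = Fintype.card (ZMod n) * (k + 1) := by rw [ZMod.card]
    _ ≤ ∑ j, (row W j).card := by
      refine card_mul_le_sum_of_compensating_perm (Equiv.subRight 1) _ _ fun j hj => ?_
      have := le_two_mul_card_row_add_card_row_sub_one hW j
      simp only [Equiv.subRight_apply]
      omega
    _ = W.card := sum_card_row W

end Torus

section Stairs

variable {m n : ℕ}

def stairs (k : ℕ) (c : ZMod n → ZMod m) (p : ZMod n × Fin (k + 1)) : ZMod m × ZMod n :=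
  (c p.1 + 3 * ((p.2 : ℕ) : ZMod m), p.1)

theorem stairs_injective {k : ℕ} (hk : 3 * k < m) (c : ZMod n → ZMod m) :
    Function.Injective (stairs k c) := by
  rintro ⟨j, t⟩ ⟨j', t'⟩ h
  simp only [stairs, Prod.mk.injEq] at h
  obtain ⟨h, rfl⟩ := h
  have h3 : ((3 * t : ℕ) : ZMod m) = ((3 * t' : ℕ) : ZMod m) := by
    push_cast
    exact add_left_cancel h
  have := congrArg ZMod.val h3
  rw [ZMod.val_cast_of_lt (by omega), ZMod.val_cast_of_lt (by omega)] at this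
  exact Prod.ext rfl (Fin.ext (show (t : ℕ) = t' by omega))

theorem isDomSet_range_stairs [NeZero m] {k : ℕ} (hm : m ≤ 3 * k + 2) {c : ZMod n → ZMod m}
    (hc : ∀ j, c j = c (j - 1) + 1 ∨ c j = c (j - 1) - 2) :
    IsDomSet (prodArc (cycArc m) (cycArc n)) (Set.range (stairs k c)) := by
  have hmem : ∀ j (t : ℕ), t ≤ k → (c j + 3 * (t : ZMod m), j) ∈ Set.range (stairs k c) :=
    fun j t ht => ⟨(j, ⟨t, by omega⟩), rfl⟩
  rintro ⟨i, j⟩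
  have hi : i = c j + ((i - c j).val : ZMod m) := by simp
  have hlt := (i - c j).val_lt
  obtain ⟨q, hq | hq | hq⟩ : ∃ q, (i - c j).val = 3 * q ∨ (i - c j).val = 3 * q + 1 ∨
      (i - c j).val = 3 * q + 2 := ⟨(i - c j).val / 3, by omega⟩
  · refine ⟨_, hmem j q (by omega), Or.inl ?_⟩
    rw [hi, hq]
    push_cast
    rfl
  · refine ⟨_, hmem j q (by omega), Or.inr (Or.inl ⟨?_, rfl⟩)⟩
    rw [cycArc, hi, hq]
    push_cast
    ring
  · rcases hc j with hcj | hcj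
    · refine ⟨_, hmem (j - 1) (q + 1) (by omega), Or.inr (Or.inr ⟨?_, ?_⟩)⟩
      · simp [cycArc]
      · rw [hi, hq, hcj]
        push_cast
        ring
    · refine ⟨_, hmem (j - 1) q (by omega), Or.inr (Or.inr ⟨?_, ?_⟩)⟩
      · simp [cycArc]
      · rw [hi, hq, hcj]
        push_cast
        ring

end Stairs

theorem apply_val_eq_apply_val_sub_one_succ {G : Type*} {n : ℕ} [NeZero n] {c : ℕ → G}
    (hc : c n = c 0) (j : ZMod n) : c j.val = c ((j - 1).val + 1) := by
  have hj : j.val = ((j - 1).val + 1) % n := by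
    rw [← ZMod.val_natCast]
    simp
  rcases (Nat.add_one_le_of_lt (j - 1).val_lt).lt_or_eq with h | h
  · rw [hj, Nat.mod_eq_of_lt h]
  · rw [hj, h, Nat.mod_self, hc]

theorem exists_cyclic_steps {m n : ℕ} (hm : Nat.Coprime 3 m) (hmn : m ≤ n) :
    ∃ c : ZMod n → ZMod m, ∀ j, c j = c (j - 1) + 1 ∨ c j = c (j - 1) - 2 := by
  have : NeZero m := ⟨by rintro rfl; simp at hm⟩
  have : NeZero n := ⟨by have := NeZero.ne m; omega⟩
  set b := ((3 : ZMod m)⁻¹ * n).val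
  have hb : 3 * (b : ZMod m) = n := by
    have := ZMod.coe_mul_inv_eq_one 3 hm
    push_cast at this
    simp [b, ← mul_assoc, this]
  have hbn : b ≤ n := (ZMod.val_lt _).le.trans hmn
  -- `c` steps by `-2` for its first `b` steps and by `1` afterwards; `3 b ≡ n` closes the cycle
  set c : ℕ → ZMod m := fun j => j - 3 * (min j b : ℕ)
  have hstep : ∀ j, c (j + 1) = c j + 1 ∨ c (j + 1) = c j - 2 := by
    intro j
    rcases lt_or_ge j b with h | h
    · right
      simp only [c, min_eq_left h.le, min_eq_left (Nat.add_one_le_of_lt h)]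
      push_cast
      ring
    · left
      simp only [c, min_eq_right h, min_eq_right (h.trans j.le_succ)]
      push_cast
      ring
  have hper : c n = c 0 := by
    simp [c, min_eq_right hbn, hb]
  refine ⟨fun j => c j.val, fun j => ?_⟩
  dsimp only
  rw [apply_val_eq_apply_val_sub_one_succ hper]
  exact hstep _

theorem exists_isDomSet_ncard_eq {m n k : ℕ} (hm : m = 3 * k + 2) (hmn : m ≤ n) :
    ∃ W : Set (ZMod m × ZMod n), IsDomSet (prodArc (cycArc m) (cycArc n)) W ∧
      W.ncard = n * (k + 1) := by
  have : NeZero m := ⟨by omega⟩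
  have h3m : Nat.Coprime 3 m := by
    rw [Nat.Prime.coprime_iff_not_dvd Nat.prime_three]
    omega
  obtain ⟨c, hc⟩ := exists_cyclic_steps h3m hmn
  refine ⟨_, isDomSet_range_stairs hm.le hc, ?_⟩
  rw [Set.ncard_range_of_injective (stairs_injective (by omega) c), Nat.card_prod,
    Nat.card_zmod, Nat.card_eq_fintype_card, Fintype.card_fin]

theorem stmt_11_general (m n k₁ : ℕ)
    (hmmod : m % 3 = 2) (hk₁ : k₁ = m / 3) (hmn : m ≤ n) :
    domNum (ZMod m × ZMod n) (prodArc (cycArc m) (cycArc n)) = n * (k₁ + 1) := by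
  have hm : m = 3 * k₁ + 2 := by omega
  have : NeZero m := ⟨by omega⟩
  have : NeZero n := ⟨by omega⟩
  obtain ⟨W, hW, hcard⟩ := exists_isDomSet_ncard_eq hm hmn
  refine domNum_eq_of_isDomSet hW hcard fun V hV => ?_
  obtain ⟨s, rfl⟩ := V.toFinite.exists_finset_coe
  rw [Set.ncard_coe_finset]
  exact mul_succ_le_card_of_isDomSet hm hV

theorem stmt_11 (m n k₁ : ℕ) (hm : 2 ≤ m) (hn : 2 ≤ n)
    (hmmod : m % 3 = 2) (hnmod : n % 3 = 2) (hk₁ : k₁ = m / 3) (hmn : m ≤ n) :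
    domNum (ZMod m × ZMod n) (prodArc (cycArc m) (cycArc n)) = n * (k₁ + 1) :=
  stmt_11_general m n k₁ hmmod hk₁ hmn
end
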